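/- arXiv:2401.05229 — 6 statements merged into one kernel-verified Lean document; each statement's English description precedes it below -/
import Mathlib

section
/- Let G be a group with lower central series L_1 = G, L_{j+1} = [L_j, G], and let O be a normal subgroup of G. Suppose the quotient Q = G/(O ∩ L_2) is nilpotent of class at most n, i.e., Q_{n+1} = {e}. Then O ∩ L_{n+2} ⊆ [O, G]. Consequently the orbit depth k = min{ j ≥ 1 : O ∩ L_{j+1} ⊆ [O, G] } is well defined and satisfies k ≤ n + 1. -/
/-- The intersection of two normal subgroups is normal. -/
instance infNormal {G : Type*} [Group G] (H K : Subgroup G) [hH : H.Normal] [hK : K.Normal] :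
    (H ⊓ K).Normal :=
  ⟨fun x hx g => ⟨hH.conj_mem x hx.1 g, hK.conj_mem x hx.2 g⟩⟩

/-- Let `G` be a group with lower central series `L 1 = G`, `L (j+1) = ⁅L j, G⁆`
(in Mathlib's indexing, `L (j+1) = lowerCentralSeries G j`), and let `O` be a normal subgroup
of `G`.  Suppose the quotient `Q = G ⧸ (O ⊓ L 2)` is nilpotent of class at most `n`,
i.e. `Q (n+1) = {e}` (in Mathlib's indexing, `lowerCentralSeries Q n = ⊥`).  Then
`O ∩ L (n+2) ⊆ ⁅O, G⁆`.  Consequently the orbit depth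
`k = min { j ≥ 1 : O ∩ L (j+1) ⊆ ⁅O, G⁆ }` is well defined (the set is nonempty) and
satisfies `k ≤ n + 1`. -/
theorem stmt_1 {G : Type*} [Group G] (O : Subgroup G) [O.Normal] (n : ℕ)
    (h : (⊤ : Subgroup (G ⧸ (O ⊓ (⊤ : Subgroup G).lowerCentralSeries 1))).lowerCentralSeries n = ⊥) :
    O ⊓ (⊤ : Subgroup G).lowerCentralSeries (n + 1) ≤ ⁅O, (⊤ : Subgroup G)⁆ ∧
      {j : ℕ | 1 ≤ j ∧ O ⊓ (⊤ : Subgroup G).lowerCentralSeries j ≤ ⁅O, (⊤ : Subgroup G)⁆}.Nonempty ∧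
      sInf {j : ℕ | 1 ≤ j ∧ O ⊓ (⊤ : Subgroup G).lowerCentralSeries j ≤ ⁅O, (⊤ : Subgroup G)⁆} ≤ n + 1 := by
  set N := O ⊓ (⊤ : Subgroup G).lowerCentralSeries 1 with hN
  have h2 : Subgroup.map (QuotientGroup.mk' N) ((⊤ : Subgroup G).lowerCentralSeries n) = ⊥ :=
    by rw [Subgroup.map_lowerCentralSeries, ← MonoidHom.range_eq_map, QuotientGroup.range_mk']; exact h
  have hker : (⊤ : Subgroup G).lowerCentralSeries n ≤ N := by
    have := (Subgroup.map_eq_bot_iff _).mp h2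
    rwa [QuotientGroup.ker_mk'] at this
  have key : O ⊓ (⊤ : Subgroup G).lowerCentralSeries (n + 1) ≤ ⁅O, (⊤ : Subgroup G)⁆ := by
    refine le_trans inf_le_right ?_
    show ⁅(⊤ : Subgroup G).lowerCentralSeries n, (⊤ : Subgroup G)⁆ ≤ ⁅O, (⊤ : Subgroup G)⁆
    exact Subgroup.commutator_mono (le_trans hker inf_le_left) le_rfl
  have hmem : (n + 1) ∈ {j : ℕ | 1 ≤ j ∧ O ⊓ (⊤ : Subgroup G).lowerCentralSeries j ≤ ⁅O, (⊤ : Subgroup G)⁆} :=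
    ⟨Nat.succ_le_succ (Nat.zero_le n), key⟩
  exact ⟨key, ⟨n + 1, hmem⟩, Nat.sInf_le hmem⟩
end

section
/- Let p, q ≥ 1 be integers and a, b ∈ ℂ. Let f, g ∈ ℂ⟦X⟧ be formal power series with: coefficient of X^0 in f equal to 0, coefficient of X^1 in f equal to 1, coefficients of X^i in f equal to 0 for 2 ≤ i ≤ p, and coefficient of X^{p+1} in f equal to a; and similarly for g with q in place of p and b in place of a. Then for every k ≤ p + q the coefficient of X^k in f ∘ g − g ∘ f is 0, and the coefficient of X^{p+q+1} in f ∘ g − g ∘ f equals a·b·(p − q). -/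
/-- Formal composition `f ∘ g` of power series over `ℂ`, intended for `g` with zero
constant term (then `coeff k (g ^ n) = 0` for `n > k`, so the defining sum is the full
substitution `∑ n, coeff n f • g ^ n`). -/
noncomputable def PSComp (f g : PowerSeries ℂ) : PowerSeries ℂ :=
  PowerSeries.mk fun k =>
    ∑ n ∈ Finset.range (k + 1), PowerSeries.coeff n f * PowerSeries.coeff k (g ^ n)

open PowerSeries Finset

lemma key (q : ℕ) (hq : 1 ≤ q) (B : PowerSeries ℂ) (n k : ℕ) (hk : k ≤ n + q) :
    PowerSeries.coeff k ((PowerSeries.X + PowerSeries.X ^ (q+1) * B) ^ n) =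
      PowerSeries.coeff k (PowerSeries.X ^ n : PowerSeries ℂ)
        + (if k = n + q then (n : ℂ) * PowerSeries.coeff 0 B else 0) := by
  rw [add_pow, map_sum]
  have hterm : ∀ j, (X : PowerSeries ℂ) ^ j * (X ^ (q+1) * B) ^ (n - j) * ((n.choose j : ℕ) : PowerSeries ℂ)
      = X ^ (j + (q+1)*(n-j)) * (B ^ (n-j) * ((n.choose j : ℕ) : PowerSeries ℂ)) := by
    intro j
    rw [mul_pow, ← pow_mul, pow_add]
    ring
  have hzero : ∀ j, j ≤ n → k < j + (q+1)*(n-j) →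
      PowerSeries.coeff k ((X : PowerSeries ℂ) ^ j * (X ^ (q+1) * B) ^ (n - j) * ((n.choose j : ℕ) : PowerSeries ℂ)) = 0 := by
    intro j hj hlt
    rw [hterm, coeff_X_pow_mul', if_neg (by omega)]
  by_cases hkn : k = n + q
  · subst hkn
    rcases Nat.eq_zero_or_pos n with rfl | hn
    · simp
    · rw [← Finset.sum_subset (show ({n-1, n} : Finset ℕ) ⊆ Finset.range (n+1) by
          intro x hx; simp only [Finset.mem_insert, Finset.mem_singleton] at hx
          rcases hx with rfl | rfl <;> simp [Finset.mem_range] <;> omega)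
        (by
          intro j hj hjn
          simp only [Finset.mem_range] at hj
          simp only [Finset.mem_insert, Finset.mem_singleton, not_or] at hjn
          apply hzero j (by omega)
          have h2 : 2 ≤ n - j := by omega
          have h4 : (q+1) * (n-j) = (n-j) + q * (n-j) := by ring
          have h5 : q * 2 ≤ q * (n - j) := Nat.mul_le_mul_left _ h2
          omega)]
      rw [Finset.sum_pair (show n - 1 ≠ n by omega)]
      have h1 : n - (n - 1) = 1 := by omega
      rw [hterm, hterm, h1]
      have he : (n - 1) + (q+1)*1 = n + q := by omega
      rw [he, coeff_X_pow_mul', if_pos le_rfl, Nat.sub_self]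
      have hc : (n.choose (n-1)) = n := (Nat.choose_symm hn).trans (Nat.choose_one_right n)
      rw [hc, Nat.sub_self, pow_zero, one_mul, Nat.choose_self, Nat.cast_one, mul_one, pow_one]
      rw [if_pos rfl]
      have hcm : PowerSeries.coeff 0 (B * ((n : ℕ) : PowerSeries ℂ)) = PowerSeries.coeff 0 B * (n : ℂ) := by
        rw [show ((n : ℕ) : PowerSeries ℂ) = PowerSeries.C (n : ℂ) from (map_natCast (PowerSeries.C) n).symm,
          PowerSeries.coeff_mul_C]
      rw [hcm]
      ring
  · rw [Finset.sum_eq_single_of_mem n (Finset.self_mem_range_succ n)]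
    · rw [Nat.sub_self, pow_zero, mul_one, Nat.choose_self, Nat.cast_one, mul_one, if_neg hkn,
        add_zero]
    · intro j hj hjn
      simp only [Finset.mem_range] at hj
      apply hzero j (by omega)
      have h2 : 1 ≤ n - j := by omega
      have h5 : q * 1 ≤ q * (n - j) := Nat.mul_le_mul_left _ h2
      have h4 : (q+1) * (n-j) = (n-j) + q * (n-j) := by ring
      omega

lemma comp_coeff (p q : ℕ) (hp : 1 ≤ p) (hq : 1 ≤ q) (a : ℂ) (f B : PowerSeries ℂ)
    (hf0 : PowerSeries.coeff 0 f = 0) (hf1 : PowerSeries.coeff 1 f = 1)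
    (hfi : ∀ i, 2 ≤ i → i ≤ p → PowerSeries.coeff i f = 0)
    (hfp : PowerSeries.coeff (p + 1) f = a)
    (k : ℕ) (hk2 : 2 ≤ k) (hk : k ≤ p + q + 1) :
    PowerSeries.coeff k (PSComp f (PowerSeries.X + PowerSeries.X ^ (q+1) * B)) =
      PowerSeries.coeff k f + PowerSeries.coeff k (PowerSeries.X + PowerSeries.X ^ (q+1) * B)
        + (if k = p + q + 1 then a * PowerSeries.coeff 0 B * ((p : ℂ) + 1) else 0) := by
  set g : PowerSeries ℂ := PowerSeries.X + PowerSeries.X ^ (q+1) * B with hg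
  rw [PSComp, PowerSeries.coeff_mk]
  have hgk : PowerSeries.coeff k (g ^ k) = 1 := by
    rw [hg, key q hq B k k (by omega), if_neg (by omega), PowerSeries.coeff_X_pow, if_pos rfl,
      add_zero]
  by_cases hkpq : k = p + q + 1
  · subst hkpq
    have hsub : ({1, p+1, p+q+1} : Finset ℕ) ⊆ Finset.range (p+q+1+1) := by
      intro x hx
      simp only [Finset.mem_insert, Finset.mem_singleton] at hx
      rcases hx with rfl | rfl | rfl <;> simp [Finset.mem_range] <;> omega
    rw [← Finset.sum_subset hsub (by
      intro n hn hns
      simp only [Finset.mem_range] at hn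
      simp only [Finset.mem_insert, Finset.mem_singleton, not_or] at hns
      rcases Nat.lt_or_ge n 2 with h2 | h2
      · interval_cases n
        · simp [hf0]
        · exact absurd rfl hns.1
      rcases le_or_gt n p with h3 | h3
      · rw [hfi n h2 h3, zero_mul]
      · have hco : PowerSeries.coeff (p+q+1) (g ^ n) = 0 := by
          rw [hg, key q hq B n (p+q+1) (by omega), if_neg (by omega),
            PowerSeries.coeff_X_pow, if_neg (by omega), add_zero]
        rw [hco, mul_zero])]
    rw [Finset.sum_insert (by simp; omega), Finset.sum_insert (by simp; omega),
      Finset.sum_singleton]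
    rw [pow_one, hf1, one_mul, hfp, hgk, mul_one]
    have hc1 : PowerSeries.coeff (p+q+1) (g ^ (p+1)) = ((p:ℂ)+1) * PowerSeries.coeff 0 B := by
      rw [hg, key q hq B (p+1) (p+q+1) (by omega), if_pos (by omega),
        PowerSeries.coeff_X_pow, if_neg (by omega), zero_add]
      push_cast
      ring
    rw [hc1, if_pos rfl]
    ring
  · have hkle : k ≤ p + q := by omega
    have hsub : ({1, k} : Finset ℕ) ⊆ Finset.range (k+1) := by
      intro x hx
      simp only [Finset.mem_insert, Finset.mem_singleton] at hx
      rcases hx with rfl | rfl <;> simp [Finset.mem_range] <;> omega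
    rw [← Finset.sum_subset hsub (by
      intro n hn hns
      simp only [Finset.mem_range] at hn
      simp only [Finset.mem_insert, Finset.mem_singleton, not_or] at hns
      rcases Nat.lt_or_ge n 2 with h2 | h2
      · interval_cases n
        · simp [hf0]
        · exact absurd rfl hns.1
      rcases le_or_gt n p with h3 | h3
      · rw [hfi n h2 h3, zero_mul]
      · have hco : PowerSeries.coeff k (g ^ n) = 0 := by
          rw [hg, key q hq B n k (by omega), if_neg (by omega),
            PowerSeries.coeff_X_pow, if_neg (by omega), add_zero]
        rw [hco, mul_zero])]
    rw [Finset.sum_pair (show (1:ℕ) ≠ k by omega)]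
    rw [pow_one, hf1, one_mul, hgk, mul_one, if_neg hkpq, add_zero, add_comm]

/-- Let `p, q ≥ 1` and `a, b ∈ ℂ`.  Let `f = X + a X^(p+1) + …` and
`g = X + b X^(q+1) + …` be formal power series (zero constant term, linear coefficient 1,
vanishing coefficients in degrees 2 through `p`, resp. `q`).  Then every coefficient of
`f ∘ g - g ∘ f` of degree `k ≤ p + q` is zero, and the coefficient of degree `p + q + 1`
equals `a·b·(p − q)`. -/
theorem stmt_2 (p q : ℕ) (hp : 1 ≤ p) (hq : 1 ≤ q) (a b : ℂ) (f g : PowerSeries ℂ)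
    (hf0 : PowerSeries.coeff 0 f = 0) (hf1 : PowerSeries.coeff 1 f = 1)
    (hfi : ∀ i, 2 ≤ i → i ≤ p → PowerSeries.coeff i f = 0)
    (hfp : PowerSeries.coeff (p + 1) f = a)
    (hg0 : PowerSeries.coeff 0 g = 0) (hg1 : PowerSeries.coeff 1 g = 1)
    (hgi : ∀ i, 2 ≤ i → i ≤ q → PowerSeries.coeff i g = 0)
    (hgq : PowerSeries.coeff (q + 1) g = b) :
    (∀ k ≤ p + q, PowerSeries.coeff k (PSComp f g - PSComp g f) = 0) ∧
      PowerSeries.coeff (p + q + 1) (PSComp f g - PSComp g f)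
        = a * b * ((p : ℂ) - (q : ℂ)) := by
  obtain ⟨A, hA⟩ : (PowerSeries.X : PowerSeries ℂ) ^ (p+1) ∣ f - PowerSeries.X := by
    rw [PowerSeries.X_pow_dvd_iff]
    intro m hm
    rw [map_sub, PowerSeries.coeff_X]
    rcases Nat.lt_or_ge m 2 with h | h
    · interval_cases m <;> simp [hf0, hf1]
    · rw [hfi m h (by omega), if_neg (by omega), sub_zero]
  obtain ⟨B, hB⟩ : (PowerSeries.X : PowerSeries ℂ) ^ (q+1) ∣ g - PowerSeries.X := by
    rw [PowerSeries.X_pow_dvd_iff]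
    intro m hm
    rw [map_sub, PowerSeries.coeff_X]
    rcases Nat.lt_or_ge m 2 with h | h
    · interval_cases m <;> simp [hg0, hg1]
    · rw [hgi m h (by omega), if_neg (by omega), sub_zero]
  have hfX : f = PowerSeries.X + PowerSeries.X ^ (p+1) * A := by rw [← hA]; ring
  have hgX : g = PowerSeries.X + PowerSeries.X ^ (q+1) * B := by rw [← hB]; ring
  have hA0 : PowerSeries.coeff 0 A = a := by
    have h := hfp
    rw [hfX, map_add, PowerSeries.coeff_X, if_neg (by omega),
      PowerSeries.coeff_X_pow_mul', if_pos le_rfl, Nat.sub_self, zero_add] at h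
    exact h
  have hB0 : PowerSeries.coeff 0 B = b := by
    have h := hgq
    rw [hgX, map_add, PowerSeries.coeff_X, if_neg (by omega),
      PowerSeries.coeff_X_pow_mul', if_pos le_rfl, Nat.sub_self, zero_add] at h
    exact h
  constructor
  · intro k hkle
    rw [map_sub]
    rcases Nat.lt_or_ge k 2 with hk2 | hk2
    · interval_cases k
      · simp [PSComp, PowerSeries.coeff_mk, hf0, hg0]
      · simp [PSComp, PowerSeries.coeff_mk, Finset.sum_range_succ, hf0, hg0, hf1, hg1]
    · have h1 := comp_coeff p q hp hq a f B hf0 hf1 hfi hfp k hk2 (by omega)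
      rw [← hgX] at h1
      have h2 := comp_coeff q p hq hp b g A hg0 hg1 hgi hgq k hk2 (by omega)
      rw [← hfX] at h2
      rw [h1, h2, if_neg (by omega), if_neg (by omega)]
      ring
  · rw [map_sub]
    have hk2 : 2 ≤ p + q + 1 := by omega
    have h1 := comp_coeff p q hp hq a f B hf0 hf1 hfi hfp (p+q+1) hk2 le_rfl
    rw [← hgX] at h1
    have h2 := comp_coeff q p hq hp b g A hg0 hg1 hgi hgq (p+q+1) hk2 (by omega)
    rw [← hfX] at h2
    rw [h1, h2, if_pos rfl, if_pos (by omega), hA0, hB0]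
    ring
end

section
/- Let p, q ≥ 1 be integers and a, b ∈ ℂ. Let f, g ∈ ℂ⟦X⟧ be formal power series with: coefficient of X^0 in f equal to 0, coefficient of X^1 in f equal to 1, coefficients of X^i in f equal to 0 for 2 ≤ i ≤ p, and coefficient of X^{p+1} in f equal to a; and similarly for g with q in place of p and b in place of a. Suppose h ∈ ℂ⟦X⟧ has zero constant term and satisfies h ∘ (g ∘ f) = f ∘ g (so that h represents the group commutator [f,g] of the corresponding germs). Then the coefficient of X^1 in h is 1, the coefficient of X^k in h is 0 for 2 ≤ k ≤ p + q, and the coefficient of X^{p+q+1} in h equals a·b·(p − q); that is, [f,g] = X + ab(p−q)X^{p+q+1} + o(X^{p+q+1}). -/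
lemma coeff_PSComp (f g : PowerSeries ℂ) (k : ℕ) :
    PowerSeries.coeff k (PSComp f g) =
      ∑ n ∈ Finset.range (k + 1), PowerSeries.coeff n f * PowerSeries.coeff k (g ^ n) := by
  simp [PSComp]

lemma sum_coeff_mul (F G : PowerSeries ℂ) (k : ℕ) :
    PowerSeries.coeff k (F * G) =
      ∑ i ∈ Finset.range (k + 1),
        PowerSeries.coeff i F * PowerSeries.coeff (k - i) G := by
  rw [PowerSeries.coeff_mul, Finset.Nat.sum_antidiagonal_eq_sum_range_succ_mk]

lemma coeff_pow_eq_zero_aux (G : PowerSeries ℂ) (h0 : PowerSeries.coeff 0 G = 0)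
    {j k : ℕ} (hk : k < j) : PowerSeries.coeff k (G ^ j) = 0 := by
  have hX : (PowerSeries.X : PowerSeries ℂ) ∣ G := by
    rw [PowerSeries.X_dvd_iff]
    simpa using h0
  exact PowerSeries.X_pow_dvd_iff.mp (pow_dvd_pow_of_dvd hX j) k hk

lemma diag_coeff (G : PowerSeries ℂ) (h0 : PowerSeries.coeff 0 G = 0) :
    ∀ n, PowerSeries.coeff n (G ^ n) = (PowerSeries.coeff 1 G) ^ n := by
  intro n
  induction n with
  | zero => simp
  | succ n IH =>
    rw [pow_succ', sum_coeff_mul]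
    have hs := Finset.sum_eq_single_of_mem
      (f := fun i => PowerSeries.coeff i G * PowerSeries.coeff (n + 1 - i) (G ^ n))
      (s := Finset.range (n + 2)) 1 (by simp)
      (by
        intro i hi hne
        rcases Nat.eq_zero_or_pos i with h | h
        · subst h; simp only [h0, zero_mul]
        · have h2 : 2 ≤ i := by omega
          have : n + 1 - i < n := by
            simp at hi; omega
          simp only [coeff_pow_eq_zero_aux G h0 this, mul_zero])
    rw [hs]
    simp [IH, pow_succ']

lemma powCoeff (q : ℕ) (hq : 1 ≤ q) (b : ℂ) (G : PowerSeries ℂ)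
    (h0 : PowerSeries.coeff 0 G = 0) (h1 : PowerSeries.coeff 1 G = 1)
    (hi : ∀ i, 2 ≤ i → i ≤ q → PowerSeries.coeff i G = 0)
    (hb : PowerSeries.coeff (q + 1) G = b) :
    ∀ j k, k ≤ j + q →
      PowerSeries.coeff k (G ^ j) =
        (if k = j then 1 else 0) + (if k = j + q ∧ 1 ≤ j then (j : ℂ) * b else 0) := by
  intro j
  induction j with
  | zero =>
    intro k hk
    rw [pow_zero, PowerSeries.coeff_one]
    have h2 : ¬(k = 0 + q ∧ 1 ≤ 0) := by omega
    simp only [h2, if_false, add_zero]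
  | succ j IH =>
    intro k hk
    rw [pow_succ', sum_coeff_mul]
    by_cases hA : k ≤ j
    · -- all terms vanish
      rw [Finset.sum_eq_zero]
      · have c1 : ¬(k = j + 1) := by omega
        have c2 : ¬(k = j + 1 + q ∧ 1 ≤ j + 1) := by omega
        simp only [c1, c2, if_false, add_zero]
      · intro i hi'
        simp only [Finset.mem_range] at hi'
        rcases Nat.eq_zero_or_pos i with h | h
        · subst h; simp only [h0, zero_mul]
        · have hle : k - i ≤ j + q := by omega
          have c1 : ¬(k - i = j) := by omega
          have c2 : ¬(k - i = j + q ∧ 1 ≤ j) := by omega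
          simp only [IH (k - i) hle, c1, c2, if_false, add_zero, mul_zero]
    · by_cases hB : k = j + 1
      · subst hB
        have hs := Finset.sum_eq_single_of_mem
          (f := fun i => PowerSeries.coeff i G * PowerSeries.coeff (j + 1 - i) (G ^ j))
          (s := Finset.range (j + 1 + 1)) 1 (by simp)
          (by
            intro i hi' hne
            simp only [Finset.mem_range] at hi'
            rcases Nat.eq_zero_or_pos i with h | h
            · subst h; simp only [h0, zero_mul]
            · have hle : j + 1 - i ≤ j + q := by omega
              have c1 : ¬(j + 1 - i = j) := by omega
              have c2 : ¬(j + 1 - i = j + q ∧ 1 ≤ j) := by omega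
              simp only [IH (j + 1 - i) hle, c1, c2, if_false, add_zero, mul_zero])
        rw [hs]
        have d1 : ¬(j + 1 = j + 1 + q ∧ 1 ≤ j + 1) := by omega
        rw [if_pos rfl, if_neg d1]
        have ej : PowerSeries.coeff j (G ^ j) = 1 := by
          have c2' : ¬(j = j + q ∧ 1 ≤ j) := by omega
          rw [IH j (by omega), if_pos rfl, if_neg c2', add_zero]
        simp only [Nat.add_sub_cancel, h1, one_mul, ej, add_zero]
      · by_cases hD : k = j + 1 + q
        · subst hD
          have hs := Finset.sum_eq_add_of_mem
            (f := fun i => PowerSeries.coeff i G * PowerSeries.coeff (j + 1 + q - i) (G ^ j))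
            (s := Finset.range (j + 1 + q + 1)) 1 (q + 1)
            (by simp only [Finset.mem_range]; omega) (by simp only [Finset.mem_range]; omega)
            (by omega)
            (by
              intro i hi' ⟨hne1, hne2⟩
              simp only [Finset.mem_range] at hi'
              rcases Nat.eq_zero_or_pos i with h | h
              · subst h; simp only [h0, zero_mul]
              · have hle : j + 1 + q - i ≤ j + q := by omega
                have c1 : ¬(j + 1 + q - i = j) := by omega
                have c2 : ¬(j + 1 + q - i = j + q ∧ 1 ≤ j) := by omega
                simp only [IH (j + 1 + q - i) hle, c1, c2, if_false, add_zero, mul_zero])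
          rw [hs]
          have e1 : PowerSeries.coeff (j + 1 + q - 1) (G ^ j) = (j : ℂ) * b := by
            have hle : j + 1 + q - 1 ≤ j + q := by omega
            rw [IH (j + 1 + q - 1) hle]
            have c1 : ¬(j + 1 + q - 1 = j) := by omega
            by_cases hj : 1 ≤ j
            · have c2 : (j + 1 + q - 1 = j + q ∧ 1 ≤ j) := ⟨by omega, hj⟩
              rw [if_neg c1, if_pos c2, zero_add]
            · have hj0 : j = 0 := by omega
              subst hj0
              have c2' : ¬(0 + 1 + q - 1 = 0 + q ∧ 1 ≤ 0) := by omega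
              rw [if_neg c1, if_neg c2']
              norm_num
          have e2 : PowerSeries.coeff (j + 1 + q - (q + 1)) (G ^ j) = 1 := by
            have hle : j + 1 + q - (q + 1) ≤ j + q := by omega
            rw [IH (j + 1 + q - (q + 1)) hle]
            have c1 : j + 1 + q - (q + 1) = j := by omega
            have c2 : ¬(j + 1 + q - (q + 1) = j + q ∧ 1 ≤ j) := by omega
            rw [if_pos c1, if_neg c2, add_zero]
          have d1 : ¬(j + 1 + q = j + 1) := by omega
          have d2 : (j + 1 + q = j + 1 + q ∧ 1 ≤ j + 1) := ⟨rfl, by omega⟩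
          rw [if_neg d1, if_pos d2]
          simp only [e1, e2, h1, one_mul, hb, mul_one, zero_add]
          push_cast
          ring
        · -- Case C : j + 1 < k ≤ j + q
          rw [Finset.sum_eq_zero]
          · have c1 : ¬(k = j + 1) := hB
            have c2 : ¬(k = j + 1 + q ∧ 1 ≤ j + 1) := by omega
            simp only [c1, c2, if_false, add_zero]
          · intro i hi'
            simp only [Finset.mem_range] at hi'
            rcases Nat.eq_zero_or_pos i with h | h
            · subst h; simp only [h0, zero_mul]
            · have hle : k - i ≤ j + q := by omega
              have c2 : ¬(k - i = j + q ∧ 1 ≤ j) := by omega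
              by_cases hone : k - i = j
              · have : PowerSeries.coeff i G = 0 := hi i (by omega) (by omega)
                simp only [this, zero_mul]
              · simp only [IH (k - i) hle, hone, c2, if_false, add_zero, mul_zero]

lemma comp0 (f g : PowerSeries ℂ) (hf0 : PowerSeries.coeff 0 f = 0) :
    PowerSeries.coeff 0 (PSComp f g) = 0 := by
  rw [coeff_PSComp]
  simp [hf0]

lemma comp1 (f g : PowerSeries ℂ) :
    PowerSeries.coeff 1 (PSComp f g) =
      PowerSeries.coeff 1 f * PowerSeries.coeff 1 g := by
  rw [coeff_PSComp, Finset.sum_range_succ, Finset.sum_range_one]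
  simp [PowerSeries.coeff_one]

lemma compCoeff (p q : ℕ) (hp : 1 ≤ p) (hq : 1 ≤ q) (a b : ℂ) (f g : PowerSeries ℂ)
    (hf0 : PowerSeries.coeff 0 f = 0) (hf1 : PowerSeries.coeff 1 f = 1)
    (hfi : ∀ i, 2 ≤ i → i ≤ p → PowerSeries.coeff i f = 0)
    (hfp : PowerSeries.coeff (p + 1) f = a)
    (hg0 : PowerSeries.coeff 0 g = 0) (hg1 : PowerSeries.coeff 1 g = 1)
    (hgi : ∀ i, 2 ≤ i → i ≤ q → PowerSeries.coeff i g = 0)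
    (hgq : PowerSeries.coeff (q + 1) g = b) :
    ∀ k, 2 ≤ k → k ≤ p + q + 1 →
      PowerSeries.coeff k (PSComp f g) =
        PowerSeries.coeff k f + PowerSeries.coeff k g +
          (if k = p + q + 1 then ((p : ℂ) + 1) * a * b else 0) := by
  intro k hk2 hk
  rw [coeff_PSComp, Finset.sum_range_succ]
  have hlast : PowerSeries.coeff k f * PowerSeries.coeff k (g ^ k) =
      PowerSeries.coeff k f := by
    rw [powCoeff q hq b g hg0 hg1 hgi hgq k k (by omega)]
    have c2 : ¬(k = k + q ∧ 1 ≤ k) := by omega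
    rw [if_pos rfl, if_neg c2, add_zero, mul_one]
  rw [hlast]
  by_cases hkeq : k = p + q + 1
  · subst hkeq
    have hs := Finset.sum_eq_add_of_mem
      (f := fun j => PowerSeries.coeff j f * PowerSeries.coeff (p + q + 1) (g ^ j))
      (s := Finset.range (p + q + 1)) 1 (p + 1)
      (by simp only [Finset.mem_range]; omega) (by simp only [Finset.mem_range]; omega)
      (by omega)
      (by
        intro i hi' ⟨hne1, hne2⟩
        simp only [Finset.mem_range] at hi'
        rcases Nat.eq_zero_or_pos i with h | h
        · subst h; simp only [hf0, zero_mul]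
        · show PowerSeries.coeff i f * PowerSeries.coeff (p + q + 1) (g ^ i) = 0
          by_cases hiq : p + q + 1 ≤ i + q
          · rw [powCoeff q hq b g hg0 hg1 hgi hgq i (p + q + 1) hiq]
            have c1 : ¬(p + q + 1 = i) := by omega
            have c2 : ¬(p + q + 1 = i + q ∧ 1 ≤ i) := by omega
            simp only [c1, c2, if_false, add_zero, mul_zero]
          · have : PowerSeries.coeff i f = 0 := hfi i (by omega) (by omega)
            simp only [this, zero_mul])
    rw [hs]
    have e1 : PowerSeries.coeff (p + q + 1) (g ^ (p + 1)) = ((p : ℂ) + 1) * b := by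
      rw [powCoeff q hq b g hg0 hg1 hgi hgq (p + 1) (p + q + 1) (by omega)]
      have c1 : ¬(p + q + 1 = p + 1) := by omega
      have c2 : (p + q + 1 = p + 1 + q ∧ 1 ≤ p + 1) := ⟨by omega, by omega⟩
      rw [if_neg c1, if_pos c2, zero_add]
      push_cast
      ring
    simp only [hf1, one_mul, hfp, e1, if_pos rfl, if_true]
    ring_nf
  · have hs := Finset.sum_eq_single_of_mem
      (f := fun j => PowerSeries.coeff j f * PowerSeries.coeff k (g ^ j))
      (s := Finset.range k) 1 (by simp only [Finset.mem_range]; omega)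
      (by
        intro i hi' hne1
        simp only [Finset.mem_range] at hi'
        rcases Nat.eq_zero_or_pos i with h | h
        · subst h; simp only [hf0, zero_mul]
        · show PowerSeries.coeff i f * PowerSeries.coeff k (g ^ i) = 0
          by_cases hiq : k ≤ i + q
          · rw [powCoeff q hq b g hg0 hg1 hgi hgq i k hiq]
            have c1 : ¬(k = i) := by omega
            by_cases hc : k = i + q
            · have : PowerSeries.coeff i f = 0 := hfi i (by omega) (by omega)
              simp only [this, zero_mul]
            · have c2 : ¬(k = i + q ∧ 1 ≤ i) := by omega
              simp only [c1, c2, if_false, add_zero, mul_zero]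
          · have : PowerSeries.coeff i f = 0 := hfi i (by omega) (by omega)
            simp only [this, zero_mul])
    rw [hs]
    simp only [hf1, one_mul, pow_one, if_neg hkeq, add_zero]
    ring

/-- Let `p, q ≥ 1` and `a, b ∈ ℂ`.  Let `f = X + a X^(p+1) + …` and
`g = X + b X^(q+1) + …` be formal power series (zero constant term, linear coefficient 1,
vanishing coefficients in degrees 2 through `p`, resp. `q`).  Suppose `h` has zero
constant term and satisfies `h ∘ (g ∘ f) = f ∘ g`, so that `h` represents the group
commutator `[f, g]` of the corresponding germs.  Then
`h = X + a·b·(p − q)·X^(p+q+1) + o(X^(p+q+1))`: the linear coefficient of `h` is `1`,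
the coefficients of degrees `2` through `p + q` vanish, and the coefficient of degree
`p + q + 1` is `a·b·(p − q)`. -/
theorem stmt_3 (p q : ℕ) (hp : 1 ≤ p) (hq : 1 ≤ q) (a b : ℂ) (f g h : PowerSeries ℂ)
    (hf0 : PowerSeries.coeff 0 f = 0) (hf1 : PowerSeries.coeff 1 f = 1)
    (hfi : ∀ i, 2 ≤ i → i ≤ p → PowerSeries.coeff i f = 0)
    (hfp : PowerSeries.coeff (p + 1) f = a)
    (hg0 : PowerSeries.coeff 0 g = 0) (hg1 : PowerSeries.coeff 1 g = 1)
    (hgi : ∀ i, 2 ≤ i → i ≤ q → PowerSeries.coeff i g = 0)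
    (hgq : PowerSeries.coeff (q + 1) g = b)
    (hh0 : PowerSeries.coeff 0 h = 0)
    (hcomm : PSComp h (PSComp g f) = PSComp f g) :
    PowerSeries.coeff 1 h = 1 ∧
      (∀ k, 2 ≤ k → k ≤ p + q → PowerSeries.coeff k h = 0) ∧
      PowerSeries.coeff (p + q + 1) h = a * b * ((p : ℂ) - (q : ℂ)) := by
  set u : PowerSeries ℂ := PSComp g f with hu
  have hu0 : PowerSeries.coeff 0 u = 0 := comp0 g f hg0
  have hu1 : PowerSeries.coeff 1 u = 1 := by
    rw [hu, comp1, hg1, hf1, mul_one]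
  have huk := compCoeff q p hq hp b a g f hg0 hg1 hgi hgq hf0 hf1 hfi hfp
  have hfgk := compCoeff p q hp hq a b f g hf0 hf1 hfi hfp hg0 hg1 hgi hgq
  have hh1 : PowerSeries.coeff 1 h = 1 := by
    have hc := congrArg (PowerSeries.coeff 1) hcomm
    simp only [comp1, hu1, hg1, hf1, mul_one, one_mul] at hc
    exact hc
  have key : ∀ k, 2 ≤ k → k ≤ p + q + 1 →
      PowerSeries.coeff k h =
        if k = p + q + 1 then a * b * ((p : ℂ) - (q : ℂ)) else 0 := by
    intro k
    induction k using Nat.strong_induction_on with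
    | _ k IH =>
      intro hk2 hkle
      have hc := congrArg (PowerSeries.coeff k) hcomm
      rw [coeff_PSComp, Finset.sum_range_succ] at hc
      have hdiag : PowerSeries.coeff k (u ^ k) = 1 := by
        rw [diag_coeff u hu0 k, hu1, one_pow]
      have hmem : 1 ∈ Finset.range k := by
        simp only [Finset.mem_range]; omega
      have hsum : ∑ j ∈ Finset.range k,
          PowerSeries.coeff j h * PowerSeries.coeff k (u ^ j) =
          PowerSeries.coeff k u := by
        have hs := Finset.sum_eq_single_of_mem
          (f := fun j => PowerSeries.coeff j h * PowerSeries.coeff k (u ^ j))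
          (s := Finset.range k) 1 hmem
          (by
            intro j hj' hne
            simp only [Finset.mem_range] at hj'
            rcases Nat.eq_zero_or_pos j with h' | h'
            · subst h'; simp only [hh0, zero_mul]
            · show PowerSeries.coeff j h * PowerSeries.coeff k (u ^ j) = 0
              have hj2 : 2 ≤ j := by omega
              have := IH j hj' hj2 (by omega)
              rw [this, if_neg (by omega), zero_mul])
        rw [hs]
        show PowerSeries.coeff 1 h * PowerSeries.coeff k (u ^ 1) = _
        rw [hh1, pow_one, one_mul]
      rw [hdiag, mul_one, hsum, hfgk k hk2 hkle, huk k hk2 (by omega)] at hc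
      by_cases hke : k = p + q + 1
      · rw [if_pos hke]
        rw [if_pos (by omega : k = q + p + 1), if_pos hke] at hc
        linear_combination hc
      · rw [if_neg hke]
        rw [if_neg (by omega : ¬k = q + p + 1), if_neg hke] at hc
        linear_combination hc
  refine ⟨hh1, ?_, ?_⟩
  · intro k hk2 hkle
    rw [key k hk2 (by omega), if_neg (by omega)]
  · rw [key (p + q + 1) (by omega) (by omega), if_pos rfl]
end

section
/- Let p ≥ 1 be an integer and a, b ∈ ℂ. Let f, g ∈ ℂ⟦X⟧ be formal power series with: coefficient of X^0 equal to 0, coefficient of X^1 equal to 1, coefficients of X^i equal to 0 for 2 ≤ i ≤ p in both f and g, coefficient of X^{p+1} in f equal to a and in g equal to b. Then the coefficient of X^k in f ∘ g − g ∘ f vanishes for every k ≤ 2p + 1; in other words, the commutator of two parabolic germs of the same level p is either the identity or a parabolic germ of level strictly greater than 2p. -/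
open PowerSeries Finset


section aux

variable {p : ℕ} {g : PowerSeries ℂ}

lemma aux_h (hp : 1 ≤ p)
    (hg0 : PowerSeries.coeff 0 g = 0) (hg1 : PowerSeries.coeff 1 g = 1)
    (hgi : ∀ i, 2 ≤ i → i ≤ p → PowerSeries.coeff i g = 0) :
    ∀ i ≤ p, PowerSeries.coeff i (g - X) = 0 := by
  intro i hi
  rw [map_sub, PowerSeries.coeff_X]
  match i with
  | 0 => simp [hg0]
  | 1 => simp [hg1]
  | (j+2) => simp [hgi (j+2) (by omega) hi]

lemma aux_hpow (hh : ∀ i ≤ p, PowerSeries.coeff i (g - X) = 0)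
    (j m : ℕ) (hm : m < j * (p + 1)) :
    PowerSeries.coeff m ((g - X) ^ j) = 0 := by
  have h1 : (X : PowerSeries ℂ) ^ (p + 1) ∣ (g - X) :=
    PowerSeries.X_pow_dvd_iff.mpr fun m hm => hh m (by omega)
  have h2 : (X : PowerSeries ℂ) ^ (j * (p + 1)) ∣ (g - X) ^ j := by
    rw [mul_comm, pow_mul]
    exact pow_dvd_pow_of_dvd h1 j
  exact PowerSeries.X_pow_dvd_iff.mp h2 m hm

lemma coeff_g_pow (hp : 1 ≤ p)
    (hg0 : PowerSeries.coeff 0 g = 0) (hg1 : PowerSeries.coeff 1 g = 1)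
    (hgi : ∀ i, 2 ≤ i → i ≤ p → PowerSeries.coeff i g = 0)
    (k n : ℕ) (hk : k ≤ 2 * p + 1) (hn : n ≤ k) :
    PowerSeries.coeff k (g ^ n) =
      (if n = k then 1 else 0)
        + (if n + p ≤ k then (n : ℂ) * PowerSeries.coeff (k - n + 1) g else 0) := by
  have hh := aux_h hp hg0 hg1 hgi
  have hg : g = X + (g - X) := by ring
  rw [hg, add_pow, map_sum]
  match n with
  | 0 => simp [PowerSeries.coeff_one, eq_comm]
  | (m+1) =>
      rw [Finset.sum_range_succ, Finset.sum_range_succ]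
      have hterm0 : ∀ j ∈ Finset.range m,
          PowerSeries.coeff k ((X : PowerSeries ℂ) ^ j * (g - X) ^ (m + 1 - j)
            * ((m+1).choose j : ℂ⟦X⟧)) = 0 := by
        intro j hj
        rw [Finset.mem_range] at hj
        have harith : k - j < (m + 1 - j) * (p + 1) := by
          calc k - j ≤ 2 * p + 1 := by omega
          _ < 2 * (p + 1) := by omega
          _ ≤ (m + 1 - j) * (p + 1) := Nat.mul_le_mul_right _ (by omega)
        rw [mul_comm, ← nsmul_eq_mul, map_nsmul, PowerSeries.coeff_X_pow_mul',
          if_pos (by omega), aux_hpow hh (m + 1 - j) (k - j) harith, smul_zero]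
      have ht1 : PowerSeries.coeff k ((X : PowerSeries ℂ) ^ m * (g - X) ^ (m + 1 - m)
            * ((m+1).choose m : ℂ⟦X⟧)) =
          (if (m+1) + p ≤ k then ((m+1 : ℕ) : ℂ) * PowerSeries.coeff (k - (m+1) + 1) g
            else 0) := by
        have e1 : m + 1 - m = 1 := by omega
        rw [e1, pow_one, Nat.choose_succ_self_right,
          mul_comm, ← nsmul_eq_mul, map_nsmul, PowerSeries.coeff_X_pow_mul',
          if_pos (by omega)]
        by_cases hc : (m+1) + p ≤ k
        · rw [if_pos hc]
          have e2 : k - m = k - (m+1) + 1 := by omega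
          rw [e2, map_sub, PowerSeries.coeff_X, if_neg (by omega), sub_zero, nsmul_eq_mul]
        · rw [if_neg hc, hh (k - m) (by omega), smul_zero]
      have ht2 : PowerSeries.coeff k ((X : PowerSeries ℂ) ^ (m+1) * (g - X) ^ (m + 1 - (m+1))
            * ((m+1).choose (m+1) : ℂ⟦X⟧)) = (if (m+1) = k then 1 else 0) := by
        rw [Nat.sub_self, pow_zero, mul_one, Nat.choose_self, Nat.cast_one, mul_one,
          PowerSeries.coeff_X_pow]
        by_cases hc : m + 1 = k
        · rw [if_pos hc, if_pos hc.symm]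
        · rw [if_neg (fun h => hc h.symm), if_neg hc]
      rw [Finset.sum_eq_zero hterm0, ht1, ht2]
      push_cast
      ring

lemma coeff_comp (hp : 1 ≤ p) (a b : ℂ) {f : PowerSeries ℂ}
    (hf0 : PowerSeries.coeff 0 f = 0) (hf1 : PowerSeries.coeff 1 f = 1)
    (hfi : ∀ i, 2 ≤ i → i ≤ p → PowerSeries.coeff i f = 0)
    (hfp : PowerSeries.coeff (p + 1) f = a)
    (hg0 : PowerSeries.coeff 0 g = 0) (hg1 : PowerSeries.coeff 1 g = 1)
    (hgi : ∀ i, 2 ≤ i → i ≤ p → PowerSeries.coeff i g = 0)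
    (hgp : PowerSeries.coeff (p + 1) g = b)
    (k : ℕ) (hk : k ≤ 2 * p + 1) :
    PowerSeries.coeff k (PSComp f g) =
      PowerSeries.coeff k f + (if p + 1 ≤ k then PowerSeries.coeff k g else 0)
        + (if k = 2 * p + 1 then ((p:ℂ)+1) * a * b else 0) := by
  rw [PSComp, PowerSeries.coeff_mk]
  have hsum : ∀ n ∈ Finset.range (k + 1),
      PowerSeries.coeff n f * PowerSeries.coeff k (g ^ n) =
        (if n = k then PowerSeries.coeff k f else 0)
          + ((if n = 1 then (if p + 1 ≤ k then PowerSeries.coeff k g else 0) else 0)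
            + (if n = p + 1 then (if k = 2 * p + 1 then ((p:ℂ)+1) * a * b else 0) else 0)) := by
    intro n hn
    rw [Finset.mem_range] at hn
    rw [coeff_g_pow hp hg0 hg1 hgi k n hk (by omega)]
    by_cases h1 : n = k
    · subst h1
      rw [if_pos rfl, if_pos rfl, if_neg (show ¬ n + p ≤ n by omega)]
      have e1 : (if n = 1 then (if p + 1 ≤ n then PowerSeries.coeff n g else 0) else 0)
          = 0 := by
        split_ifs with ha hb
        · exact absurd hb (by omega)
        · rfl
        · rfl
      have e2 : (if n = p + 1 then (if n = 2 * p + 1 then ((p:ℂ)+1) * a * b else 0) else 0)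
          = 0 := by
        split_ifs with ha hb
        · exact absurd hb (by omega)
        · rfl
        · rfl
      rw [e1, e2]
      ring
    · rw [if_neg h1, if_neg h1]
      by_cases h2 : n + p ≤ k
      · rw [if_pos h2]
        by_cases hn1 : n = 1
        · subst hn1
          rw [if_pos rfl, if_pos (by omega), if_neg (by omega), hf1]
          have hkk : k - 1 + 1 = k := by omega
          rw [hkk]
          push_cast
          ring
        · rw [if_neg hn1]
          by_cases hnp : n = p + 1
          · subst hnp
            rw [if_pos rfl, hfp]
            have hk2 : k = 2 * p + 1 := by omega
            subst hk2
            rw [if_pos rfl]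
            have e3 : 2 * p + 1 - (p + 1) + 1 = p + 1 := by omega
            rw [e3, hgp]
            push_cast
            ring
          · rw [if_neg hnp]
            have hfn : PowerSeries.coeff n f = 0 := by
              match n with
              | 0 => exact hf0
              | (j+1) => exact hfi (j+1) (by omega) (by omega)
            rw [hfn]
            ring
      · rw [if_neg h2]
        have e1 : (if n = 1 then (if p + 1 ≤ k then PowerSeries.coeff k g else 0) else 0)
            = 0 := by
          split_ifs with ha hb
          · exact absurd hb (by omega)
          · rfl
          · rfl
        have e2 : (if n = p + 1 then (if k = 2 * p + 1 then ((p:ℂ)+1) * a * b else 0) else 0)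
            = 0 := by
          split_ifs with ha hb
          · exact absurd hb (by omega)
          · rfl
          · rfl
        rw [e1, e2]
        ring
  rw [Finset.sum_congr rfl hsum, Finset.sum_add_distrib, Finset.sum_add_distrib]
  have e1 : ∑ n ∈ Finset.range (k+1), (if n = k then PowerSeries.coeff k f else 0)
      = PowerSeries.coeff k f := by
    rw [Finset.sum_ite_eq' (Finset.range (k+1)) k (fun _ => PowerSeries.coeff k f),
      if_pos (Finset.self_mem_range_succ k)]
  have e2 : ∑ n ∈ Finset.range (k+1),
      (if n = 1 then (if p + 1 ≤ k then PowerSeries.coeff k g else 0) else 0)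
      = (if p + 1 ≤ k then PowerSeries.coeff k g else 0) := by
    rw [Finset.sum_ite_eq' (Finset.range (k+1)) 1
      (fun _ => (if p + 1 ≤ k then PowerSeries.coeff k g else 0))]
    by_cases h : 1 ∈ Finset.range (k+1)
    · rw [if_pos h]
    · rw [Finset.mem_range] at h
      rw [if_neg (by rwa [Finset.mem_range]), if_neg (by omega)]
  have e3 : ∑ n ∈ Finset.range (k+1),
      (if n = p + 1 then (if k = 2 * p + 1 then ((p:ℂ)+1) * a * b else 0) else 0)
      = (if k = 2 * p + 1 then ((p:ℂ)+1) * a * b else 0) := by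
    rw [Finset.sum_ite_eq' (Finset.range (k+1)) (p+1)
      (fun _ => (if k = 2 * p + 1 then ((p:ℂ)+1) * a * b else 0))]
    by_cases h : p + 1 ∈ Finset.range (k+1)
    · rw [if_pos h]
    · rw [Finset.mem_range] at h
      rw [if_neg (by rwa [Finset.mem_range]), if_neg (by omega)]
  rw [e1, e2, e3]
  ring

end aux

/-- Let `p ≥ 1` and `a, b ∈ ℂ`.  Let `f = X + a X^(p+1) + …` and `g = X + b X^(p+1) + …`
be formal power series (zero constant term, linear coefficient 1, vanishing coefficients
in degrees 2 through `p`).  Then the coefficient of `X^k` in `f ∘ g − g ∘ f` vanishes for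
every `k ≤ 2p + 1`: the commutator of two parabolic germs of the same level `p` is either
the identity or a parabolic germ of level strictly greater than `2p`. -/
theorem stmt_5 (p : ℕ) (hp : 1 ≤ p) (a b : ℂ) (f g : PowerSeries ℂ)
    (hf0 : PowerSeries.coeff 0 f = 0) (hf1 : PowerSeries.coeff 1 f = 1)
    (hfi : ∀ i, 2 ≤ i → i ≤ p → PowerSeries.coeff i f = 0)
    (hfp : PowerSeries.coeff (p + 1) f = a)
    (hg0 : PowerSeries.coeff 0 g = 0) (hg1 : PowerSeries.coeff 1 g = 1)
    (hgi : ∀ i, 2 ≤ i → i ≤ p → PowerSeries.coeff i g = 0)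
    (hgp : PowerSeries.coeff (p + 1) g = b) :
    ∀ k ≤ 2 * p + 1, PowerSeries.coeff k (PSComp f g - PSComp g f) = 0 := by
  intro k hk
  rw [map_sub,
    coeff_comp hp a b hf0 hf1 hfi hfp hg0 hg1 hgi hgp k hk,
    coeff_comp hp b a hg0 hg1 hgi hgp hf0 hf1 hfi hfp k hk]
  by_cases h : p + 1 ≤ k
  · rw [if_pos h, if_pos h]
    by_cases h2 : k = 2 * p + 1
    · rw [if_pos h2, if_pos h2]
      ring
    · rw [if_neg h2, if_neg h2]
      ring
  · rw [if_neg h, if_neg h, if_neg (by omega), if_neg (by omega)]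
    have hfg : PowerSeries.coeff k f = PowerSeries.coeff k g := by
      match k with
      | 0 => rw [hf0, hg0]
      | 1 => rw [hf1, hg1]
      | (j+2) => rw [hfi (j+2) (by omega) (by omega), hgi (j+2) (by omega) (by omega)]
    rw [hfg]
    ring
end

section
/- Let F(x,y) = (x−1)(x+1)f₃(x,y)f₄(x,y) with f₃, f₄ affine, and let ε ∈ ℂ. On U = {(x,y) ∈ ℂ² : x ≠ ±1} define φ̃(x,y) = F(x,y)/(x−1) + F(x,y)²/(x+1), ψ₁(x,y) = 1/(x−1) + 2F(x,y)/(x+1), ψ₂(x,y) = 2/(x+1), and the 1-forms η₀ = dF + εφ̃ dx, η₁ = εψ₁ dx, η₂ = εψ₂ dx, η₃ = 0. Then the Godbillon–Vey equations hold on U: dη₀ = η₀∧η₁, dη₁ = η₀∧η₂, dη₂ = η₀∧η₃ + η₁∧η₂ (= 0); explicitly, ∂_yφ̃ = ψ₁·∂_yF, ∂_yψ₁ = ψ₂·∂_yF, and ∂_yψ₂ = 0 on U. Moreover ω = F·df₁/f₁ + F²·df₂/f₂ (f₁ = x−1, f₂ = x+1) is a polynomial 1-form, and ∂_yF(x,y)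 = 0 whenever x = 1 or x = −1, so the deformation dF + εω = 0 preserves the pair of parallel lines x = ±1 and admits a Godbillon–Vey sequence of length 3, i.e., it has a first integral of Riccati type. -/
/-!
For fixed `x`, `φ̃(x, ·)` is `u ↦ u/(x−1) + u²/(x+1)` composed with `F(x, ·)` and `ψ₁(x, ·)` is
affine in `F(x, ·)`, so the Godbillon–Vey identities are the chain rule. Since `x − 1` and `x + 1`
both divide `F`, the quotients in `φ̃` cancel and `φ̃` is a polynomial; and `F(±1, ·) ≡ 0`.
-/

open MvPolynomial

section Deriv

variable {𝕜 : Type*} [NontriviallyNormedField 𝕜] {f : 𝕜 → 𝕜} {y : 𝕜}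

theorem deriv_div_add_sq_div (hf : DifferentiableAt 𝕜 f y) (p q : 𝕜) :
    deriv (fun t => f t / p + f t ^ 2 / q) y = (1 / p + 2 * f y / q) * deriv f y := by
  have h : HasDerivAt (fun t => f t / p + f t ^ 2 / q)
      (deriv f y / p + (2 : ℕ) * f y ^ (2 - 1) * deriv f y / q) y :=
    (hf.hasDerivAt.div_const p).add ((hf.hasDerivAt.pow 2).div_const q)
  rw [h.deriv]
  ring

theorem deriv_const_add_mul_div (hf : DifferentiableAt 𝕜 f y) (c a q : 𝕜) :
    deriv (fun t => c + a * f t / q) y = a / q * deriv f y := by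
  rw [(((hf.hasDerivAt.const_mul a).div_const q).const_add c).deriv]
  ring

end Deriv

theorem div_add_sq_div_of_mul {K : Type*} [Field K] {u v : K} (hu : u ≠ 0) (hv : v ≠ 0) (g : K) :
    u * v * g / u + (u * v * g) ^ 2 / v = v * g + u ^ 2 * v * g ^ 2 := by
  field_simp

noncomputable def affinePoly {R : Type*} [CommSemiring R] (a b c : R) : MvPolynomial (Fin 2) R :=
  C a * X 0 + C b * X 1 + C c

@[simp]
theorem eval_affinePoly {R : Type*} [CommSemiring R] (a b c x y : R) :
    eval ![x, y] (affinePoly a b c) = a * x + b * y + c := by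
  simp [affinePoly]

theorem stmt_10_general (a₃ b₃ c₃ a₄ b₄ c₄ : ℂ)
    (F : ℂ → ℂ → ℂ)
    (hF : ∀ x y, F x y = (x - 1) * (x + 1) * (a₃ * x + b₃ * y + c₃) * (a₄ * x + b₄ * y + c₄)) :
    (∀ x y : ℂ, x ≠ 1 → x ≠ -1 →
      (deriv (fun t => F x t / (x - 1) + (F x t) ^ 2 / (x + 1)) y
        = (1 / (x - 1) + 2 * F x y / (x + 1)) * deriv (fun t => F x t) y)
      ∧ (deriv (fun t => 1 / (x - 1) + 2 * F x t / (x + 1)) y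
        = (2 / (x + 1)) * deriv (fun t => F x t) y)
      ∧ deriv (fun _ : ℂ => 2 / (x + 1)) y = 0)
    ∧ (∃ Q : MvPolynomial (Fin 2) ℂ, ∀ x y : ℂ, x ≠ 1 → x ≠ -1 →
        MvPolynomial.eval ![x, y] Q = F x y / (x - 1) + (F x y) ^ 2 / (x + 1))
    ∧ (∀ y : ℂ, deriv (fun t => F 1 t) y = 0 ∧ deriv (fun t => F (-1) t) y = 0) := by
  have hF' (x : ℂ) : (fun t => F x t)
      = fun t => (x - 1) * (x + 1) * (a₃ * x + b₃ * t + c₃) * (a₄ * x + b₄ * t + c₄) :=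
    funext (hF x)
  have hdiff (x y : ℂ) : DifferentiableAt ℂ (fun t => F x t) y := by
    rw [hF' x]
    fun_prop
  refine ⟨fun x y _ _ => ⟨deriv_div_add_sq_div (hdiff x y) _ _,
    deriv_const_add_mul_div (hdiff x y) _ _ _, deriv_const y _⟩, ?_, fun y => ?_⟩
  · let G := affinePoly a₃ b₃ c₃ * affinePoly a₄ b₄ c₄
    refine ⟨(X 0 + 1) * G + (X 0 - 1) ^ 2 * (X 0 + 1) * G ^ 2, fun x y hx₁ hxm₁ => ?_⟩
    rw [hF, mul_assoc _ (a₃ * x + b₃ * y + c₃),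
      div_add_sq_div_of_mul (sub_ne_zero.mpr hx₁) (fun h => hxm₁ (eq_neg_of_add_eq_zero_left h))]
    simp [G]
  · have hF₁ : (fun t => F 1 t) = fun _ => 0 := by rw [hF' 1]; simp
    have hFm₁ : (fun t => F (-1) t) = fun _ => 0 := by rw [hF' (-1)]; simp
    simp [hF₁, hFm₁]

/-- Let `F(x,y) = (x−1)(x+1)f₃(x,y)f₄(x,y)` with `f₃, f₄` affine, and `ε ∈ ℂ`.  On
`U = {(x,y) : x ≠ ±1}` set `φ̃ = F/(x−1) + F²/(x+1)`, `ψ₁ = 1/(x−1) + 2F/(x+1)`,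
`ψ₂ = 2/(x+1)`, and `η₀ = dF + εφ̃ dx`, `η₁ = εψ₁ dx`, `η₂ = εψ₂ dx`, `η₃ = 0`.  The
Godbillon–Vey equations `dη₀ = η₀∧η₁`, `dη₁ = η₀∧η₂`, `dη₂ = η₀∧η₃ + η₁∧η₂ (= 0)` hold
on `U`; explicitly `∂_yφ̃ = ψ₁·∂_yF`, `∂_yψ₁ = ψ₂·∂_yF`, `∂_yψ₂ = 0` on `U`.  Moreover
`ω = F·df₁/f₁ + F²·df₂/f₂` (with `f₁ = x−1`, `f₂ = x+1`) is a polynomial 1-form, and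
`∂_yF = 0` on the lines `x = 1` and `x = −1`, so the deformation `dF + εω = 0` preserves
the pair of parallel lines `x = ±1` and admits a Godbillon–Vey sequence of length 3,
i.e. it has a first integral of Riccati type. -/
theorem stmt_10 (a₃ b₃ c₃ a₄ b₄ c₄ : ℂ)
    (h₃ : (a₃, b₃) ≠ (0, 0)) (h₄ : (a₄, b₄) ≠ (0, 0)) (ε : ℂ)
    (F : ℂ → ℂ → ℂ)
    (hF : ∀ x y, F x y = (x - 1) * (x + 1) * (a₃ * x + b₃ * y + c₃) * (a₄ * x + b₄ * y + c₄)) :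
    (∀ x y : ℂ, x ≠ 1 → x ≠ -1 →
      (deriv (fun t => F x t / (x - 1) + (F x t) ^ 2 / (x + 1)) y
        = (1 / (x - 1) + 2 * F x y / (x + 1)) * deriv (fun t => F x t) y)
      ∧ (deriv (fun t => 1 / (x - 1) + 2 * F x t / (x + 1)) y
        = (2 / (x + 1)) * deriv (fun t => F x t) y)
      ∧ deriv (fun _ : ℂ => 2 / (x + 1)) y = 0)
    ∧ (∃ Q : MvPolynomial (Fin 2) ℂ, ∀ x y : ℂ, x ≠ 1 → x ≠ -1 →
        MvPolynomial.eval ![x, y] Q = F x y / (x - 1) + (F x y) ^ 2 / (x + 1))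
    ∧ (∀ y : ℂ, deriv (fun t => F 1 t) y = 0 ∧ deriv (fun t => F (-1) t) y = 0) :=
  stmt_10_general a₃ b₃ c₃ a₄ b₄ c₄ F hF
end

section
/- Let F(x,y) = (x−1)(x+1)f₃(x,y)f₄(x,y) with f₃, f₄ affine, and let ε ∈ ℂ. On U = {(x,y) ∈ ℂ² : x ≠ ±1} define φ̃ = F²/(x−1) + F³/(x+1), ψ₁ = 2F/(x−1) + 3F²/(x+1), ψ₂ = 2/(x−1) + 6F/(x+1), ψ₃ = 6/(x+1) (all evaluated at (x, F(x,y))), and the 1-forms η₀ = dF + εφ̃ dx, η_j = εψ_j dx for j = 1,2,3, η_j = 0 for j ≥ 4. Then all Godbillon–Vey equations hold: dη₀ = η₀∧η₁, dη₁ = η₀∧η₂, dη₂ = η₀∧η₃ + η₁∧η₂, dη₃ = η₀∧η₄ + 3η₁∧η₃ + 3η₂∧η₂ + 3η₃∧η₁, where every wedge η_k∧η_l with k, l ≥ 1 vanishes; explicitly ∂_yφ̃ = ψ₁∂_yF, ∂_yψ₁ = ψ₂∂_yF, ∂_yψ₂ = ψ₃∂_yF, ∂_yψ₃ = 0 on U.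 Hence the deformation dF + ε(F²·df₁/f₁ + F³·df₂/f₂) = 0 admits a Godbillon–Vey sequence of length 4. -/
/-! Each of `φ̃, ψ₁, ψ₂, ψ₃` is `g(F)` for a polynomial `g` in one variable `s` (with coefficients
depending on `x` only), and the polynomials are successive `s`-derivatives of
`s²/(x-1) + s³/(x+1)`. The chain rule then gives `∂_y g(F) = g'(F) ∂_y F` for each of them, and the
last one is constant in `y`. -/

section PowerDerivatives

variable {𝕜 : Type*} [NontriviallyNormedField 𝕜] (p q s : 𝕜)

theorem hasDerivAt_sq_div_add_cube_div :
    HasDerivAt (fun s => s ^ 2 / p + s ^ 3 / q) (2 * s / p + 3 * s ^ 2 / q) s := by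
  refine (((hasDerivAt_pow 2 s).div_const p).add ((hasDerivAt_pow 3 s).div_const q)).congr_deriv ?_
  norm_num

theorem hasDerivAt_two_mul_div_add_three_mul_sq_div :
    HasDerivAt (fun s => 2 * s / p + 3 * s ^ 2 / q) (2 / p + 6 * s / q) s := by
  refine ((((hasDerivAt_id s).const_mul 2).div_const p).add
    (((hasDerivAt_pow 2 s).const_mul 3).div_const q)).congr_deriv ?_
  norm_num
  ring

theorem hasDerivAt_const_add_six_mul_div :
    HasDerivAt (fun s => p + 6 * s / q) (6 / q) s := by
  simpa using (((hasDerivAt_id s).const_mul 6).div_const q).const_add p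

end PowerDerivatives

theorem stmt_11_general (a₃ b₃ c₃ a₄ b₄ c₄ : ℂ)
    (F : ℂ → ℂ → ℂ)
    (hF : ∀ x y, F x y = (x - 1) * (x + 1) * (a₃ * x + b₃ * y + c₃) * (a₄ * x + b₄ * y + c₄)) :
    ∀ x y : ℂ, x ≠ 1 → x ≠ -1 →
      (deriv (fun t => (F x t) ^ 2 / (x - 1) + (F x t) ^ 3 / (x + 1)) y
        = (2 * F x y / (x - 1) + 3 * (F x y) ^ 2 / (x + 1)) * deriv (fun t => F x t) y)
      ∧ (deriv (fun t => 2 * F x t / (x - 1) + 3 * (F x t) ^ 2 / (x + 1)) y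
        = (2 / (x - 1) + 6 * F x y / (x + 1)) * deriv (fun t => F x t) y)
      ∧ (deriv (fun t => 2 / (x - 1) + 6 * F x t / (x + 1)) y
        = (6 / (x + 1)) * deriv (fun t => F x t) y)
      ∧ deriv (fun _ : ℂ => 6 / (x + 1)) y = 0 := by
  intro x y _ _
  have hFx : HasDerivAt (fun t => F x t) (deriv (fun t => F x t) y) y := by
    simp only [hF]
    exact DifferentiableAt.hasDerivAt (by fun_prop)
  exact ⟨((hasDerivAt_sq_div_add_cube_div _ _ _).comp y hFx).deriv,
    ((hasDerivAt_two_mul_div_add_three_mul_sq_div _ _ _).comp y hFx).deriv,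
    ((hasDerivAt_const_add_six_mul_div _ _ _).comp y hFx).deriv,
    deriv_const y _⟩

/-- Let `F(x,y) = (x−1)(x+1)f₃(x,y)f₄(x,y)` with `f₃, f₄` affine, and `ε ∈ ℂ`.  On
`U = {(x,y) : x ≠ ±1}` set `φ̃ = F²/(x−1) + F³/(x+1)`, `ψ₁ = 2F/(x−1) + 3F²/(x+1)`,
`ψ₂ = 2/(x−1) + 6F/(x+1)`, `ψ₃ = 6/(x+1)`, and `η₀ = dF + εφ̃ dx`, `η_j = εψ_j dx`
(`j = 1,2,3`), `η_j = 0` (`j ≥ 4`).  Then all Godbillon–Vey equations hold: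
`dη₀ = η₀∧η₁`, `dη₁ = η₀∧η₂`, `dη₂ = η₀∧η₃ + η₁∧η₂`, `dη₃ = η₀∧η₄ + 3η₁∧η₃ + 3η₂∧η₂ +
3η₃∧η₁`, where every wedge `η_k∧η_l` with `k, l ≥ 1` vanishes (all are multiples of
`dx`); explicitly `∂_yφ̃ = ψ₁·∂_yF`, `∂_yψ₁ = ψ₂·∂_yF`, `∂_yψ₂ = ψ₃·∂_yF`, `∂_yψ₃ = 0`
on `U`.  Hence the deformation `dF + ε(F²·df₁/f₁ + F³·df₂/f₂) = 0` admits a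
Godbillon–Vey sequence of length 4. -/
theorem stmt_11 (a₃ b₃ c₃ a₄ b₄ c₄ : ℂ)
    (h₃ : (a₃, b₃) ≠ (0, 0)) (h₄ : (a₄, b₄) ≠ (0, 0)) (ε : ℂ)
    (F : ℂ → ℂ → ℂ)
    (hF : ∀ x y, F x y = (x - 1) * (x + 1) * (a₃ * x + b₃ * y + c₃) * (a₄ * x + b₄ * y + c₄)) :
    ∀ x y : ℂ, x ≠ 1 → x ≠ -1 →
      (deriv (fun t => (F x t) ^ 2 / (x - 1) + (F x t) ^ 3 / (x + 1)) y
        = (2 * F x y / (x - 1) + 3 * (F x y) ^ 2 / (x + 1)) * deriv (fun t => F x t) y)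
      ∧ (deriv (fun t => 2 * F x t / (x - 1) + 3 * (F x t) ^ 2 / (x + 1)) y
        = (2 / (x - 1) + 6 * F x y / (x + 1)) * deriv (fun t => F x t) y)
      ∧ (deriv (fun t => 2 / (x - 1) + 6 * F x t / (x + 1)) y
        = (6 / (x + 1)) * deriv (fun t => F x t) y)
      ∧ deriv (fun _ : ℂ => 6 / (x + 1)) y = 0 :=
  stmt_11_general a₃ b₃ c₃ a₄ b₄ c₄ F hF
end
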